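/- arXiv:1205.0373 — 3 statements merged into one kernel-verified Lean document; each statement's English description precedes it below -/
import Mathlib

section
/- Let $h$ be an odd positive integer and $n$ an integer with $(n,h)=1$. Then the number of residues $\rho$ modulo $h$ with $\rho^2 \equiv n \pmod{h}$ equals $\sum_{d \mid h} \mu^2(d) \left(\frac{n}{d}\right)$, where $\left(\frac{n}{d}\right)$ is the Jacobi symbol. -/
open ArithmeticFunction

noncomputable def cnt (n : ℤ) (m : ℕ) : ℕ := Nat.card {x : ZMod m // x ^ 2 = (n : ZMod m)}

lemma cnt_eq_filter (n : ℤ) (h : ℕ) (hpos : 0 < h) :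
    ((Finset.range h).filter (fun ρ : ℕ => ((ρ : ZMod h)) ^ 2 = (n : ZMod h))).card = cnt n h := by
  haveI : NeZero h := ⟨hpos.ne'⟩
  classical
  rw [cnt, Nat.card_eq_fintype_card, Fintype.card_subtype]
  apply Finset.card_bij' (fun (a : ℕ) _ => (a : ZMod h)) (fun (x : ZMod h) _ => x.val)
  · intro a ha
    simp only [Finset.mem_filter, Finset.mem_range] at ha ⊢
    exact ⟨Finset.mem_univ _, ha.2⟩
  · intro x hx
    simp only [Finset.mem_filter, Finset.mem_univ, true_and] at hx ⊢
    refine ⟨Finset.mem_range.2 (ZMod.val_lt x), ?_⟩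
    rw [ZMod.natCast_val, ZMod.cast_id]
    exact hx
  · intro a ha
    simp only [Finset.mem_filter, Finset.mem_range] at ha
    exact ZMod.val_cast_of_lt ha.1
  · intro x hx
    rw [ZMod.natCast_val, ZMod.cast_id]

lemma cnt_mul (n : ℤ) {a b : ℕ} (hab : Nat.Coprime a b) :
    cnt n (a * b) = cnt n a * cnt n b := by
  let e := ZMod.chineseRemainder hab
  have key : ∀ x : ZMod (a * b), x ^ 2 = (n : ZMod (a*b)) ↔
      ((e x).1 ^ 2 = (n : ZMod a) ∧ (e x).2 ^ 2 = (n : ZMod b)) := by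
    intro x
    rw [← e.injective.eq_iff, map_pow, map_intCast]
    constructor
    · intro h; exact ⟨congrArg Prod.fst h |>.trans (by simp), congrArg Prod.snd h |>.trans (by simp)⟩
    · rintro ⟨h1, h2⟩
      ext
      · simpa using h1
      · simpa using h2
  have e2 : {x : ZMod (a*b) // x ^ 2 = (n : ZMod (a*b))} ≃
      {x : ZMod a // x ^ 2 = (n : ZMod a)} × {x : ZMod b // x ^ 2 = (n : ZMod b)} :=
    (e.toEquiv.subtypeEquiv (fun x => by rw [key x]; rfl)).trans
      (Equiv.subtypeProdEquivProd)
  rw [cnt, Nat.card_congr e2, Nat.card_prod]; rfl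

lemma sq_cast_iff (m : ℕ) (a n : ℤ) :
    ((a : ZMod m)) ^ 2 = (n : ZMod m) ↔ (m : ℤ) ∣ n - a ^ 2 := by
  rw [show ((a : ZMod m)) ^ 2 = ((a ^ 2 : ℤ) : ZMod m) by push_cast; ring,
    ZMod.intCast_eq_intCast_iff, Int.modEq_iff_dvd]

lemma cnt_pow_succ (n : ℤ) {p : ℕ} (hp : p.Prime) (hodd : p ≠ 2) (hnd : ¬ ((p : ℤ) ∣ n))
    (j : ℕ) : cnt n (p ^ (j + 2)) = cnt n (p ^ (j + 1)) := by
  have hq : Prime ((p : ℕ) : ℤ) := Nat.prime_iff_prime_int.mp hp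
  have hq2 : ¬ ((p : ℤ) ∣ 2) := by
    intro h
    have h' : p ∣ 2 := by exact_mod_cast h
    exact hodd ((Nat.prime_dvd_prime_iff_eq hp Nat.prime_two).mp h')
  -- any square root of n is coprime to p
  have hroot : ∀ a : ℤ, ∀ m : ℕ, 1 ≤ m → ((p : ℤ) ^ m ∣ n - a ^ 2) → ¬ ((p:ℤ) ∣ a) := by
    intro a m hm hdvd hpa
    apply hnd
    have h1 : (p : ℤ) ∣ n - a ^ 2 := dvd_trans (dvd_pow_self _ (by omega)) hdvd
    have h2 : (p : ℤ) ∣ a ^ 2 := hpa.pow (by norm_num)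
    have := dvd_add h1 h2
    simpa using this
  have hdvd' : (p : ℕ) ^ (j + 1) ∣ p ^ (j + 2) := pow_dvd_pow p (by omega)
  let φ := ZMod.castHom hdvd' (ZMod (p ^ (j + 1)))
  let f : {x : ZMod (p ^ (j + 2)) // x ^ 2 = (n : ZMod (p ^ (j + 2)))} →
      {y : ZMod (p ^ (j + 1)) // y ^ 2 = (n : ZMod (p ^ (j + 1)))} :=
    fun x => ⟨φ x.1, by rw [← map_pow, x.2, map_intCast]⟩
  have hbij : Function.Bijective f := by
    constructor
    · rintro ⟨x, hx⟩ ⟨y, hy⟩ hxy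
      obtain ⟨a, rfl⟩ := ZMod.intCast_surjective x
      obtain ⟨b, rfl⟩ := ZMod.intCast_surjective y
      simp only [f, Subtype.mk.injEq, map_intCast] at hxy ⊢
      rw [sq_cast_iff] at hx hy
      push_cast at hx hy
      have hab : ((p : ℤ)) ^ (j + 1) ∣ b - a := by
        have := (ZMod.intCast_eq_intCast_iff _ _ _).mp hxy
        have := this.dvd
        push_cast at this
        exact this
      obtain ⟨t, ht⟩ := hab
      have hfac : (p : ℤ) ^ (j + 2) ∣ ((p:ℤ) ^ (j+1)) * (t * (b + a)) := by
        have h1 : (p : ℤ) ^ (j + 2) ∣ (b ^ 2 - a ^ 2) := by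
          have := dvd_sub hx hy
          have e : n - a ^ 2 - (n - b ^ 2) = b ^ 2 - a ^ 2 := by ring
          rwa [e] at this
        have e2 : b ^ 2 - a ^ 2 = ((p:ℤ) ^ (j+1)) * (t * (b + a)) := by
          linear_combination (b + a) * ht
        rwa [e2] at h1
    -- cancel p^{j+1}
      have hpt : (p : ℤ) ∣ t * (b + a) := by
        have hppow : ((p:ℤ)) ^ (j + 2) = ((p:ℤ) ^ (j+1)) * p := by ring
        rw [hppow] at hfac
        exact (mul_dvd_mul_iff_left (pow_ne_zero _ hq.ne_zero)).mp hfac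
      have hpba : ¬ ((p : ℤ) ∣ b + a) := by
        intro hba
        have hpa : ¬ ((p:ℤ) ∣ a) := hroot a (j+2) (by omega) hx
        have hba' : (p : ℤ) ∣ b - a := dvd_trans (dvd_pow_self _ (by omega)) ⟨t, ht⟩
        have h2a : (p : ℤ) ∣ 2 * a := by
          have : (2:ℤ) * a = (b + a) - (b - a) := by ring
          rw [this]; exact dvd_sub hba hba'
        rcases hq.dvd_mul.mp h2a with h | h
        · exact hq2 h
        · exact hpa h
      have hptt : (p : ℤ) ∣ t := by
        rcases hq.dvd_mul.mp hpt with h | h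
        · exact h
        · exact absurd h hpba
      obtain ⟨s, hs⟩ := hptt
      rw [ZMod.intCast_eq_intCast_iff, Int.modEq_iff_dvd, ht, hs]
      exact ⟨s, by push_cast; ring⟩
    · rintro ⟨y, hy⟩
      obtain ⟨b, rfl⟩ := ZMod.intCast_surjective y
      rw [sq_cast_iff] at hy
      push_cast at hy
      obtain ⟨c, hc⟩ := hy
      have hcop : IsCoprime ((p:ℤ)) (2 * b) := by
        rw [Prime.coprime_iff_not_dvd hq]
        intro h
        rcases hq.dvd_mul.mp h with h | h
        · exact hq2 h
        · exact hroot b (j+1) (by omega) ⟨c, hc⟩ h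
      obtain ⟨u, v, huv⟩ := hcop
      refine ⟨⟨((b + c * v * (p:ℤ) ^ (j+1) : ℤ) : ZMod (p ^ (j+2))), ?_⟩, ?_⟩
      · rw [sq_cast_iff]
        push_cast
        refine ⟨c * u - (p:ℤ) ^ j * (c ^ 2 * v ^ 2), ?_⟩
        linear_combination hc - ((p:ℤ) ^ (j+1) * c) * huv
      · simp only [f, Subtype.mk.injEq, map_intCast]
        rw [ZMod.intCast_eq_intCast_iff, Int.modEq_iff_dvd]
        push_cast
        exact ⟨-(c * v), by ring⟩
  rw [cnt, cnt]
  exact (Nat.card_eq_of_bijective f hbij)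

lemma cnt_prime (n : ℤ) {p : ℕ} [Fact p.Prime] (hodd : p ≠ 2) :
    (cnt n p : ℤ) = legendreSym p n + 1 := by
  rw [← legendreSym.card_sqrts p hodd n]
  congr 1
  rw [cnt, Nat.card_eq_fintype_card, Set.toFinset_card]
  rfl

noncomputable def jmu (n : ℤ) : ArithmeticFunction ℤ :=
  ⟨fun d => if d = 0 then 0 else (moebius d : ℤ) ^ 2 * jacobiSym n d, by simp⟩

lemma jmu_apply (n : ℤ) {d : ℕ} (hd : d ≠ 0) :
    jmu n d = (moebius d : ℤ) ^ 2 * jacobiSym n d := by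
  simp [jmu, hd]

lemma jmu_mult (n : ℤ) : (jmu n).IsMultiplicative := by
  constructor
  · simp [jmu, jacobiSym.one_right]
  · intro a b hab
    rcases eq_or_ne a 0 with rfl | ha
    · have : b = 1 := by simpa using hab
      simp [jmu, this]
    rcases eq_or_ne b 0 with rfl | hb
    · have : a = 1 := by simpa using hab
      simp [jmu, this]
    rw [jmu_apply n (mul_ne_zero ha hb), jmu_apply n ha, jmu_apply n hb,
      isMultiplicative_moebius.map_mul_of_coprime hab, jacobiSym.mul_right' n ha hb]
    ring

lemma sum_jmu (n : ℤ) (m : ℕ) :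
    ∑ d ∈ m.divisors, (moebius d : ℤ) ^ 2 * jacobiSym n d = (↑zeta * jmu n) m := by
  rw [coe_zeta_mul_apply]
  refine Finset.sum_congr rfl fun d hd => ?_
  rw [jmu_apply n (Nat.pos_of_mem_divisors hd).ne']

lemma zeta_jmu_mult (n : ℤ) : ((↑zeta : ArithmeticFunction ℤ) * jmu n).IsMultiplicative :=
  (isMultiplicative_zeta.natCast).mul (jmu_mult n)

lemma sum_jmu_prime_pow (n : ℤ) {p : ℕ} (hp : p.Prime) {k : ℕ} (hk : 1 ≤ k) :
    ∑ d ∈ (p ^ k).divisors, (moebius d : ℤ) ^ 2 * jacobiSym n d = 1 + jacobiSym n p := by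
  rw [Nat.sum_divisors_prime_pow hp]
  have step : ∀ i ∈ Finset.range (k + 1),
      (moebius (p ^ i) : ℤ) ^ 2 * jacobiSym n (p ^ i)
        = (if i = 0 then (1:ℤ) else 0) + (if i = 1 then jacobiSym n p else 0) := by
    intro i _
    match i with
    | 0 => simp [jacobiSym.one_right]
    | 1 => simp [moebius_apply_prime hp]
    | (m+2) =>
      rw [moebius_apply_prime_pow hp (by omega)]
      simp
  rw [Finset.sum_congr rfl step, Finset.sum_add_distrib,
    Finset.sum_ite_eq' (Finset.range (k+1)) 0, Finset.sum_ite_eq' (Finset.range (k+1)) 1]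
  have h1 : (1:ℕ) ∈ Finset.range (k+1) := Finset.mem_range.2 (by omega)
  have h0 : (0:ℕ) ∈ Finset.range (k+1) := Finset.mem_range.2 (by omega)
  rw [if_pos h0, if_pos h1]

lemma cnt_pow (n : ℤ) {p : ℕ} (hp : p.Prime) (hodd : p ≠ 2) (hnd : ¬ ((p : ℤ) ∣ n)) :
    ∀ k : ℕ, cnt n (p ^ (k + 1)) = cnt n p := by
  intro k
  induction k with
  | zero => rw [pow_one]
  | succ j ih => rw [cnt_pow_succ n hp hodd hnd j]; exact ih

lemma main_count (n : ℤ) (h : ℕ) : 0 < h → Odd h → IsCoprime n (h : ℤ) →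
    (cnt n h : ℤ) = ∑ d ∈ h.divisors, (moebius d : ℤ) ^ 2 * jacobiSym n d := by
  induction h using Nat.recOnPosPrimePosCoprime with
  | zero => intro hh; exact absurd hh (lt_irrefl 0)
  | one =>
    intro _ _ _
    haveI : Unique {x : ZMod 1 // x ^ 2 = (n : ZMod 1)} :=
      ⟨⟨⟨0, Subsingleton.elim _ _⟩⟩, fun a => Subtype.ext (Subsingleton.elim _ _)⟩
    rw [cnt, Nat.card_unique, Nat.divisors_one]
    simp [jacobiSym.one_right]
  | prime_pow p k pp hk =>
    intro _ hoddpk hcop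
    have podd : p ≠ 2 := by
      rintro rfl
      exact (Nat.not_odd_iff_even.mpr (Nat.even_pow.mpr ⟨even_two, hk.ne'⟩)) hoddpk
    have hcop' : IsCoprime n ((p : ℤ) ^ k) := by
      have : ((p ^ k : ℕ) : ℤ) = (p : ℤ) ^ k := by push_cast; ring
      rwa [this] at hcop
    have hcp : IsCoprime n (p : ℤ) :=
      hcop'.of_isCoprime_of_dvd_right (dvd_pow_self _ hk.ne')
    have hq : Prime ((p : ℕ) : ℤ) := Nat.prime_iff_prime_int.mp pp
    have hnd : ¬ ((p : ℤ) ∣ n) := fun hd => hq.not_unit (hcp.isUnit_of_dvd' hd dvd_rfl)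
    haveI : Fact p.Prime := ⟨pp⟩
    obtain ⟨j, rfl⟩ : ∃ j, k = j + 1 := ⟨k - 1, by omega⟩
    rw [cnt_pow n pp podd hnd j, sum_jmu_prime_pow n pp (by omega : 1 ≤ j + 1),
      cnt_prime n podd, jacobiSym.legendreSym.to_jacobiSym]
    ring
  | coprime a b ha hb hab iha ihb =>
    intro _ hodd hcop
    have hoa : Odd a := (Nat.odd_mul.mp hodd).1
    have hob : Odd b := (Nat.odd_mul.mp hodd).2
    have hcast : ((a * b : ℕ) : ℤ) = (a : ℤ) * (b : ℤ) := by push_cast; ring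
    rw [hcast] at hcop
    have hca : IsCoprime n (a : ℤ) := hcop.of_mul_right_left
    have hcb : IsCoprime n (b : ℤ) := hcop.of_mul_right_right
    rw [cnt_mul n hab, sum_jmu, (zeta_jmu_mult n).map_mul_of_coprime hab, ← sum_jmu, ← sum_jmu,
      ← iha (by omega) hoa hca, ← ihb (by omega) hob hcb]
    push_cast
    ring

/-- The number of square roots of `n` modulo an odd positive `h` with `(n,h)=1`
equals `∑_{d ∣ h} μ²(d) (n/d)` (Jacobi symbol). -/
theorem stmt_0 (h : ℕ) (hpos : 0 < h) (hodd : Odd h) (n : ℤ)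
    (hcop : IsCoprime n (h : ℤ)) :
    (((Finset.range h).filter
        (fun ρ : ℕ => ((ρ : ZMod h)) ^ 2 = (n : ZMod h))).card : ℤ)
      = ∑ d ∈ h.divisors, (moebius d) ^ 2 * jacobiSym n d := by
  rw [cnt_eq_filter n h hpos]
  exact main_count n h hpos hodd hcop
end

section
/- The cubic surface $S \subset \mathbb{P}^3$ over $\mathbb{Q}$ defined by $x_1^3 + x_2 x_3^2 + x_0 x_1 x_2 = 0$ contains exactly two lines, namely $\{x_1 = x_2 = 0\}$ and $\{x_1 = x_3 = 0\}$. -/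
open LinearMap

/-- Coefficient extraction for the cubic restricted to a pencil `u + t • w`
with `w 1 = 0` and `u 1 ≠ 0`: forces `w = 0` in coordinates `0, 2, 3`. -/
lemma stmt_9_key {K : Type*} [Field K] [CharZero K] (a0 a1 a2 a3 b0 b2 b3 : K)
    (ha1 : a1 ≠ 0)
    (h : ∀ t : K, (a1 + t * 0) ^ 3 + (a2 + t * b2) * (a3 + t * b3) ^ 2 +
        (a0 + t * b0) * (a1 + t * 0) * (a2 + t * b2) = 0) :
    b0 = 0 ∧ b2 = 0 ∧ b3 = 0 := by
  have h0 := h 0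
  have h1 := h 1
  have hm1 := h (-1)
  have h2 := h 2
  have hc3 : b2 * b3 ^ 2 = 0 := by
    linear_combination (1/6 : K) * h2 - (1/2 : K) * h1 + (1/2 : K) * h0 - (1/6 : K) * hm1
  have hc2 : a2 * b3 ^ 2 + 2 * a3 * b2 * b3 + a1 * b0 * b2 = 0 := by
    linear_combination (1/2 : K) * h1 + (1/2 : K) * hm1 - h0
  have hc1 : a3 ^ 2 * b2 + 2 * a2 * a3 * b3 + a0 * a1 * b2 + a1 * a2 * b0 = 0 := by
    linear_combination (1/2 : K) * h1 - (1/2 : K) * hm1 - hc3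
  have hc0 : a1 ^ 3 + a2 * a3 ^ 2 + a0 * a1 * a2 = 0 := by linear_combination h0
  by_cases hb2 : b2 = 0
  · have ha2 : a2 ≠ 0 := by
      intro ha2
      apply ha1
      have : a1 ^ 3 = 0 := by linear_combination hc0 - (a3 ^ 2 + a0 * a1) * ha2
      exact pow_eq_zero_iff (by norm_num) |>.mp this
    have hb3 : b3 = 0 := by
      have : b3 ^ 2 = 0 := by
        have := mul_eq_zero.mp (show a2 * b3 ^ 2 = 0 by
          linear_combination hc2 - (2 * a3 * b3 + a1 * b0) * hb2)
        tauto
      exact pow_eq_zero_iff (by norm_num) |>.mp this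
    have hb0 : b0 = 0 := by
      have : a1 * a2 * b0 = 0 := by
        linear_combination hc1 - (a3 ^ 2 + a0 * a1) * hb2 - (2 * a2 * a3) * hb3
      rcases mul_eq_zero.mp this with h' | h'
      · rcases mul_eq_zero.mp h' with h'' | h'' <;> [exact absurd h'' ha1; exact absurd h'' ha2]
      · exact h'
    exact ⟨hb0, hb2, hb3⟩
  · exfalso
    have hb3 : b3 = 0 := by
      have : b3 ^ 2 = 0 := by
        rcases mul_eq_zero.mp hc3 with h' | h' <;> [exact absurd h' hb2; exact h']
      exact pow_eq_zero_iff (by norm_num) |>.mp this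
    have hb0 : b0 = 0 := by
      have : a1 * b0 * b2 = 0 := by
        linear_combination hc2 - (a2 * b3 + 2 * a3 * b2) * hb3
      rcases mul_eq_zero.mp this with h' | h'
      · rcases mul_eq_zero.mp h' with h'' | h'' <;> [exact absurd h'' ha1; exact h'']
      · exact absurd h' hb2
    have key2 : a3 ^ 2 + a0 * a1 = 0 := by
      have : (a3 ^ 2 + a0 * a1) * b2 = 0 := by
        linear_combination hc1 - (2 * a2 * a3) * hb3 - (a1 * a2) * hb0
      rcases mul_eq_zero.mp this with h' | h' <;> [exact h'; exact absurd h' hb2]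
    apply ha1
    have : a1 ^ 3 = 0 := by linear_combination hc0 - a2 * key2
    exact pow_eq_zero_iff (by norm_num) |>.mp this

/-- The intersection of the kernels of two coordinate projections (with the
complementary coordinates `i j`) has dimension at most 2. -/
lemma stmt_9_dim {K : Type*} [Field K] (k l i j : Fin 4)
    (hcov : ∀ v : Fin 4 → K, v k = 0 → v l = 0 → v i = 0 → v j = 0 → v = 0) :
    Module.finrank K ↥(ker (proj (R := K) (φ := fun _ : Fin 4 => K) k) ⊓
      ker (proj (R := K) (φ := fun _ : Fin 4 => K) l)) ≤ 2 := by
  have hinj : Function.Injective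
      (((proj (R := K) (φ := fun _ : Fin 4 => K) i).prod
        (proj (R := K) (φ := fun _ : Fin 4 => K) j)) ∘ₗ
        (ker (proj (R := K) (φ := fun _ : Fin 4 => K) k) ⊓
         ker (proj (R := K) (φ := fun _ : Fin 4 => K) l)).subtype) := by
    rw [← LinearMap.ker_eq_bot, LinearMap.ker_eq_bot']
    intro m hm
    obtain ⟨hm1, hm2⟩ := Submodule.mem_inf.mp m.2
    rw [LinearMap.mem_ker, LinearMap.proj_apply] at hm1 hm2
    simp only [LinearMap.comp_apply, Submodule.subtype_apply, LinearMap.prod_apply,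
      Function.prod, LinearMap.proj_apply, Prod.mk_eq_zero] at hm
    exact Subtype.ext (hcov m.1 hm1 hm2 hm.1 hm.2)
  have := LinearMap.finrank_le_finrank_of_injective hinj
  simpa [Module.finrank_prod] using this

/-- The cubic surface `x₁³ + x₂x₃² + x₀x₁x₂ = 0` contains exactly two lines,
`{x₁ = x₂ = 0}` and `{x₁ = x₃ = 0}`: a two-dimensional linear subspace of `K⁴`
(over an algebraic closure of `ℚ`) lies on the affine cone of the surface if and
only if it is one of the two subspaces cutting out these lines. -/
theorem stmt_9 (K : Type*) [Field K] [IsAlgClosed K] [Algebra ℚ K]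
    (W : Submodule K (Fin 4 → K)) (hW : Module.finrank K W = 2) :
    (∀ v ∈ W, v 1 ^ 3 + v 2 * v 3 ^ 2 + v 0 * v 1 * v 2 = 0) ↔
      (W = ker (proj (R := K) (φ := fun _ : Fin 4 => K) 1) ⊓
             ker (proj (R := K) (φ := fun _ : Fin 4 => K) 2) ∨
       W = ker (proj (R := K) (φ := fun _ : Fin 4 => K) 1) ⊓
             ker (proj (R := K) (φ := fun _ : Fin 4 => K) 3)) := by
  haveI : CharZero K := charZero_of_injective_algebraMap (algebraMap ℚ K).injective
  constructor
  · intro H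
    -- Step A: every v ∈ W has v 1 = 0
    have stepA : ∀ v ∈ W, v 1 = 0 := by
      by_contra hA
      push_neg at hA
      obtain ⟨u, hu, hu1⟩ := hA
      -- claim: any w ∈ W with w 1 = 0 is 0
      have claim : ∀ w ∈ W, w 1 = 0 → w = 0 := by
        intro w hw hw1
        have h : ∀ t : K, (u 1 + t * 0) ^ 3 + (u 2 + t * w 2) * (u 3 + t * w 3) ^ 2 +
            (u 0 + t * w 0) * (u 1 + t * 0) * (u 2 + t * w 2) = 0 := by
          intro t
          have := H (u + t • w) (W.add_mem hu (W.smul_mem t hw))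
          simp only [Pi.add_apply, Pi.smul_apply, smul_eq_mul, hw1] at this
          linear_combination this
        obtain ⟨hb0, hb2, hb3⟩ := stmt_9_key (u 0) (u 1) (u 2) (u 3) (w 0) (w 2) (w 3) hu1 h
        funext i
        fin_cases i <;> simp [hb0, hw1, hb2, hb3]
      -- hence proj 1 is injective on W, so finrank W ≤ 1, contradiction
      have hinj : Function.Injective
          ((proj (R := K) (φ := fun _ : Fin 4 => K) 1) ∘ₗ W.subtype) := by
        rw [← LinearMap.ker_eq_bot, LinearMap.ker_eq_bot']
        intro m hm
        exact Subtype.ext (claim m.1 m.2 hm)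
      have := LinearMap.finrank_le_finrank_of_injective hinj
      rw [hW, Module.finrank_self] at this
      omega
    -- Step B: v 2 * v 3 ^ 2 = 0 on W, hence v 2 ≡ 0 or v 3 ≡ 0
    have stepB : ∀ v ∈ W, v 2 * v 3 ^ 2 = 0 := by
      intro v hv
      have := H v hv
      rw [stepA v hv] at this
      linear_combination this
    have hor : (∀ v ∈ W, v 2 = 0) ∨ (∀ v ∈ W, v 3 = 0) := by
      by_contra hc
      push_neg at hc
      obtain ⟨⟨a, ha, ha2⟩, ⟨b, hb, hb3⟩⟩ := hc
      have ha3 : a 3 = 0 := by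
        rcases mul_eq_zero.mp (stepB a ha) with h' | h'
        · exact absurd h' ha2
        · exact pow_eq_zero_iff (by norm_num) |>.mp h'
      have hb2 : b 2 = 0 := by
        rcases mul_eq_zero.mp (stepB b hb) with h' | h'
        · exact h'
        · exact absurd (pow_eq_zero_iff (n := 2) (by norm_num) |>.mp h') hb3
      have := stepB (a + b) (W.add_mem ha hb)
      simp only [Pi.add_apply, ha3, hb2, add_zero, zero_add] at this
      rcases mul_eq_zero.mp this with h' | h'
      · exact ha2 h'
      · exact hb3 (pow_eq_zero_iff (n := 2) (by norm_num) |>.mp h')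
    -- Step C: conclude equality by dimension count
    rcases hor with h23 | h23
    · left
      have hle : W ≤ ker (proj (R := K) (φ := fun _ : Fin 4 => K) 1) ⊓
          ker (proj (R := K) (φ := fun _ : Fin 4 => K) 2) := by
        intro v hv
        rw [Submodule.mem_inf, LinearMap.mem_ker, LinearMap.mem_ker,
          LinearMap.proj_apply, LinearMap.proj_apply]
        exact ⟨stepA v hv, h23 v hv⟩
      refine Submodule.eq_of_le_of_finrank_le hle ?_
      rw [hW]
      exact stmt_9_dim 1 2 0 3 (by
        intro v h1 h2 h3 h4; funext i; fin_cases i <;> assumption)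
    · right
      have hle : W ≤ ker (proj (R := K) (φ := fun _ : Fin 4 => K) 1) ⊓
          ker (proj (R := K) (φ := fun _ : Fin 4 => K) 3) := by
        intro v hv
        rw [Submodule.mem_inf, LinearMap.mem_ker, LinearMap.mem_ker,
          LinearMap.proj_apply, LinearMap.proj_apply]
        exact ⟨stepA v hv, h23 v hv⟩
      refine Submodule.eq_of_le_of_finrank_le hle ?_
      rw [hW]
      exact stmt_9_dim 1 3 0 2 (by
        intro v h1 h2 h3 h4; funext i; fin_cases i <;> assumption)
  · rintro (rfl | rfl) <;> intro v hv <;>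
      simp only [Submodule.mem_inf, LinearMap.mem_ker, LinearMap.proj_apply] at hv <;>
      rw [hv.1, hv.2] <;> ring
end

section
/- Let $\eta_1, \dots, \eta_{10}$ be integers satisfying the torsor equation $\eta_1 \eta_{10} + \eta_2 \eta_9^2 + \eta_4 \eta_5^2 \eta_6^4 \eta_7^3 \eta_8 = 0$ with $\eta_1, \dots, \eta_7 > 0$ and $\eta_8 \neq 0$. Then the point $(\eta_8 \eta_{10} : \eta_1 \eta_2 \eta_3^2 \eta_4^2 \eta_5^2 \eta_6^2 \eta_7^2 \eta_8 : \eta_1^3 \eta_2^2 \eta_3^4 \eta_4^3 \eta_5^2 \eta_7 : \eta_2 \eta_3 \eta_4 \eta_5 \eta_6 \eta_7 \eta_8 \eta_9)$ lies on the cubic surface $x_1^3 + x_2 x_3^2 + x_0 x_1 x_2 = 0$ in $\mathbb{P}^3$. -/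
/-- If `η₁, …, η₁₀` satisfy the torsor equation
`η₁η₁₀ + η₂η₉² + η₄η₅²η₆⁴η₇³η₈ = 0` with `η₁, …, η₇ > 0` and `η₈ ≠ 0`, then the point
`(η₈η₁₀ : η₁η₂η₃²η₄²η₅²η₆²η₇²η₈ : η₁³η₂²η₃⁴η₄³η₅²η₇ : η₂η₃η₄η₅η₆η₇η₈η₉)`
lies on the cubic surface `x₁³ + x₂x₃² + x₀x₁x₂ = 0`. -/
theorem stmt_11 (η₁ η₂ η₃ η₄ η₅ η₆ η₇ η₈ η₉ η₁₀ : ℤ)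
    (h₁ : 0 < η₁) (h₂ : 0 < η₂) (h₃ : 0 < η₃) (h₄ : 0 < η₄) (h₅ : 0 < η₅)
    (h₆ : 0 < η₆) (h₇ : 0 < η₇) (h₈ : η₈ ≠ 0)
    (htorsor : η₁ * η₁₀ + η₂ * η₉ ^ 2 + η₄ * η₅ ^ 2 * η₆ ^ 4 * η₇ ^ 3 * η₈ = 0) :
    (η₁ * η₂ * η₃ ^ 2 * η₄ ^ 2 * η₅ ^ 2 * η₆ ^ 2 * η₇ ^ 2 * η₈) ^ 3
      + (η₁ ^ 3 * η₂ ^ 2 * η₃ ^ 4 * η₄ ^ 3 * η₅ ^ 2 * η₇)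
          * (η₂ * η₃ * η₄ * η₅ * η₆ * η₇ * η₈ * η₉) ^ 2
      + (η₈ * η₁₀) * (η₁ * η₂ * η₃ ^ 2 * η₄ ^ 2 * η₅ ^ 2 * η₆ ^ 2 * η₇ ^ 2 * η₈)
          * (η₁ ^ 3 * η₂ ^ 2 * η₃ ^ 4 * η₄ ^ 3 * η₅ ^ 2 * η₇) = 0 := by
  linear_combination (η₁ ^ 3 * η₂ ^ 3 * η₃ ^ 6 * η₄ ^ 5 * η₅ ^ 4 * η₆ ^ 2 * η₇ ^ 3 * η₈ ^ 2) * htorsor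
end
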